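/- arXiv:math/0011177 — 3 statements merged into one kernel-verified Lean document; each statement's English description precedes it below -/
import Mathlib

section
/- Let q ∈ ℂ with q ≠ 0, let A be an associative ℂ-algebra, and let λ₁, λ₂ ∈ A satisfy λ₁λ₂ = q⁻¹λ₂λ₁. Let S be the Solution I flip (nonzero entries S^{11}_{11} = q, S^{12}_{21} = q, S^{21}_{12} = q⁻¹, S^{22}_{22} = q⁻¹) and P the wedge projector (nonzero entries P^{12}_{12} = 1/2, P^{12}_{21} = -q/2, P^{21}_{12} = -q⁻¹/2, P^{21}_{21} = 1/2). Then the curvature of the metric connection vanishes: for all i,j,k,l ∈ {1,2}, Σ_{m,n,p,r,s} S^{im}_{rn} S^{np}_{sj} P^{rs}_{kl} λ_m λ_p = 0 in A. -/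
open Finset

/-- The Solution I flip: nonzero entries `S^{11}_{11} = q`, `S^{12}_{21} = q`,
`S^{21}_{12} = q⁻¹`, `S^{22}_{22} = q⁻¹` (indices in `Fin 2`, `0 ↔ 1`, `1 ↔ 2`). -/
noncomputable def solIS (q : ℂ) : Fin 2 → Fin 2 → Fin 2 → Fin 2 → ℂ :=
  fun i j k l =>
    if i = 0 ∧ j = 0 ∧ k = 0 ∧ l = 0 then q
    else if i = 0 ∧ j = 1 ∧ k = 1 ∧ l = 0 then q
    else if i = 1 ∧ j = 0 ∧ k = 0 ∧ l = 1 then q⁻¹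
    else if i = 1 ∧ j = 1 ∧ k = 1 ∧ l = 1 then q⁻¹
    else 0

/-- The wedge-product projector of the Wess–Zumino calculus on the real quantum
plane: nonzero entries `P^{12}_{12} = 1/2`, `P^{12}_{21} = -q/2`,
`P^{21}_{12} = -q⁻¹/2`, `P^{21}_{21} = 1/2`. -/
noncomputable def wedgeP (q : ℂ) : Fin 2 → Fin 2 → Fin 2 → Fin 2 → ℂ :=
  fun i j k l =>
    if i = 0 ∧ j = 1 ∧ k = 0 ∧ l = 1 then 1 / 2
    else if i = 0 ∧ j = 1 ∧ k = 1 ∧ l = 0 then -q / 2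
    else if i = 1 ∧ j = 0 ∧ k = 0 ∧ l = 1 then -q⁻¹ / 2
    else if i = 1 ∧ j = 0 ∧ k = 1 ∧ l = 0 then 1 / 2
    else 0

set_option maxHeartbeats 2000000 in
/-- Flatness of the Solution I metric connection on the quantum plane: if
`λ₁λ₂ = q⁻¹λ₂λ₁` then the curvature
`(1/2) R^i_{jkl} = S^{im}_{rn} S^{np}_{sj} P^{rs}_{kl} λ_m λ_p` vanishes. -/
theorem solI_flat (q : ℂ) (hq : q ≠ 0) (A : Type*) [Ring A] [Algebra ℂ A]
    (lam : Fin 2 → A) (hlam : lam 0 * lam 1 = q⁻¹ • (lam 1 * lam 0)) :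
    ∀ i j k l : Fin 2,
      (∑ m : Fin 2, ∑ n : Fin 2, ∑ p : Fin 2, ∑ r : Fin 2, ∑ s : Fin 2,
          (solIS q i m r n * solIS q n p s j * wedgeP q r s k l)
            • (lam m * lam p))
        = 0 := by
  intro i j k l
  fin_cases i <;> fin_cases j <;> fin_cases k <;> fin_cases l <;>
    (simp only [Fin.mk_zero, Fin.mk_one, Fin.sum_univ_two, solIS, wedgeP]; norm_num) <;>
    (try (rw [hlam, smul_smul, ← add_smul];
          convert zero_smul ℂ (lam 1 * lam 0) using 2 <;> field_simp <;> ring))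
end

section
/- Let A be an associative ℂ-algebra with unit, let q̃ ∈ ℂ with q̃⁴ ≠ 1, let ε₁, ε₂ ∈ {−1, 1}, and let x, y ∈ A be invertible elements with xy = q̃yx. Define λ₁ = −ε₁ q̃⁴(q̃⁴−1)⁻¹ x⁻²y² and λ₂ = ε₂ q̃²(q̃⁴−1)⁻¹ x⁻². Then the inner derivations e_i(f) = [λ_i, f] satisfy: [λ₁, x] = ε₁ q̃²(q̃²+1)⁻¹ x⁻¹y², [λ₁, y] = ε₁ q̃⁴(q̃²+1)⁻¹ x⁻²y³, [λ₂, x] = 0, and [λ₂, y] = −ε₂ q̃²(q̃²+1)⁻¹ x⁻²y. -/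
/-- On the extended real quantum plane (`x`, `y` invertible with `xy = tqyx`),
the elements `λ₁ = −ε₁ tq⁴(tq⁴−1)⁻¹ x⁻²y²` and `λ₂ = ε₂ tq²(tq⁴−1)⁻¹ x⁻²`
generate, via inner derivations `e_i = [λ_i, ·]`, the frame derivations of the
Wess–Zumino calculus:
`[λ₁, x] = ε₁ tq²(tq²+1)⁻¹ x⁻¹y²`, `[λ₁, y] = ε₁ tq⁴(tq²+1)⁻¹ x⁻²y³`,
`[λ₂, x] = 0`, `[λ₂, y] = −ε₂ tq²(tq²+1)⁻¹ x⁻²y`. -/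
theorem quantum_plane_frame_derivations
    (A : Type*) [Ring A] [Algebra ℂ A]
    (tq ε₁ ε₂ : ℂ) (hq : tq ^ 4 ≠ 1)
    (hε₁ : ε₁ = -1 ∨ ε₁ = 1) (hε₂ : ε₂ = -1 ∨ ε₂ = 1)
    (x y xi yi : A)
    (hx : x * xi = 1) (hx' : xi * x = 1)
    (hy : y * yi = 1) (hy' : yi * y = 1)
    (hxy : x * y = tq • (y * x)) :
    let lam₁ : A := (-ε₁ * tq ^ 4 * (tq ^ 4 - 1)⁻¹) • (xi ^ 2 * y ^ 2)
    let lam₂ : A := (ε₂ * tq ^ 2 * (tq ^ 4 - 1)⁻¹) • (xi ^ 2)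
    (lam₁ * x - x * lam₁ = (ε₁ * tq ^ 2 * (tq ^ 2 + 1)⁻¹) • (xi * y ^ 2))
    ∧ (lam₁ * y - y * lam₁ = (ε₁ * tq ^ 4 * (tq ^ 2 + 1)⁻¹) • (xi ^ 2 * y ^ 3))
    ∧ (lam₂ * x - x * lam₂ = 0)
    ∧ (lam₂ * y - y * lam₂ = (-ε₂ * tq ^ 2 * (tq ^ 2 + 1)⁻¹) • (xi ^ 2 * y)) := by
  intro lam₁ lam₂
  by_cases htq : tq = 0
  · -- degenerate: ring is trivial
    have hy0 : y = 0 := by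
      have := congrArg (fun a => xi * a) hxy
      simpa [htq, ← mul_assoc, hx'] using this
    have h10 : (1 : A) = 0 := by rw [← hy, hy0, zero_mul]
    have hall : ∀ a : A, a = 0 := fun a => by rw [← mul_one a, h10, mul_zero]
    refine ⟨?_, ?_, ?_, ?_⟩ <;> simp [hall _]
  · have h2 : tq ^ 2 ≠ 1 := fun h => hq (by
      rw [show (4:ℕ) = 2*2 from rfl, pow_mul, h, one_pow])
    have h21 : tq ^ 2 + 1 ≠ 0 := fun h => hq (by
      have : tq ^ 2 = -1 := by linear_combination h
      rw [show (4:ℕ) = 2*2 from rfl, pow_mul, this]; ring)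
    have h41 : tq ^ 4 - 1 ≠ 0 := sub_ne_zero.mpr hq
    have hxa : ∀ a : A, x * (xi * a) = a := fun a => by rw [← mul_assoc, hx, one_mul]
    have hx'a : ∀ a : A, xi * (x * a) = a := fun a => by rw [← mul_assoc, hx', one_mul]
    have hyx : ∀ a : A, y * (x * a) = tq⁻¹ • (x * (y * a)) := fun a => by
      rw [← mul_assoc, ← mul_assoc, ← smul_mul_assoc]
      congr 1
      rw [hxy, smul_smul, inv_mul_cancel₀ htq, one_smul]
    have h41' : (-1 : ℂ) + tq ^ 4 ≠ 0 := by
      intro h; exact hq (by linear_combination h)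
    have h21' : (1 : ℂ) + tq ^ 2 ≠ 0 := by
      intro h; exact h21 (by linear_combination h)
    have hmix : -tq ^ 2 + tq ^ 6 ≠ 0 := by
      have h0 := mul_ne_zero (pow_ne_zero 2 htq) h41'
      intro h; exact h0 (by linear_combination h)
    have hyx0 : y * x = tq⁻¹ • (x * y) := by
      rw [hxy, smul_smul, inv_mul_cancel₀ htq, one_smul]
    have hyxi0 : y * xi = tq • (xi * y) := by
      have h := congrArg (fun a => xi * (a * xi)) hxy
      simp only [smul_mul_assoc, mul_smul_comm, mul_assoc, hx'a] at h
      rw [h, hx, mul_one]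
    have hyxi : ∀ a : A, y * (xi * a) = tq • (xi * (y * a)) := fun a => by
      rw [← mul_assoc, hyxi0, smul_mul_assoc, mul_assoc]
    refine ⟨?_, ?_, ?_, ?_⟩ <;>
      simp only [lam₁, lam₂, pow_succ, pow_zero, one_mul, smul_mul_assoc,
        mul_smul_comm, mul_assoc, hxa, hx'a, hyx, hyxi, hyx0, hyxi0, hx, hx',
        smul_smul, mul_one] <;>
      match_scalars <;> ring_nf <;> field_simp <;> ring
end

section
/- Let A be an associative ℂ-algebra with unit, let q̃ ∈ ℂ with q̃ ≠ 0, and let x, y, dx, dy ∈ A with x, y invertible, satisfying xy = q̃yx and the Wess–Zumino relations: x·dx = q̃² dx·x, x·dy = q̃ dy·x + (q̃²−1) dx·y, y·dx = q̃ dx·y, y·dy = q̃² dy·y. Define θ¹ := (q̃²+1) x y⁻² dx and θ² := −(q̃²+1) x (x y⁻¹ dy − dx). Then θ¹ and θ² commute with both x and y: θ¹x = xθ¹, θ¹y = yθ¹, θ²x = xθ², θ²y = yθ². -/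
/-- For the Wess–Zumino first-order differential calculus on the real quantum
plane `xy = tqyx` (bimodule relations `x·dx = tq² dx·x`,
`x·dy = tq dy·x + (tq²−1) dx·y`, `y·dx = tq dx·y`, `y·dy = tq² dy·y`), the
1-forms `θ¹ := (tq²+1) x y⁻² dx` and `θ² := −(tq²+1) x (x y⁻¹ dy − dx)` commute
with both generators `x` and `y`, i.e. they form a frame. -/
theorem quantum_plane_frame_commutes
    (A : Type*) [Ring A] [Algebra ℂ A]
    (tq : ℂ) (hq : tq ≠ 0)
    (x y xi yi dx dy : A)
    (hx : x * xi = 1) (hx' : xi * x = 1)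
    (hy : y * yi = 1) (hy' : yi * y = 1)
    (hxy : x * y = tq • (y * x))
    (hxdx : x * dx = (tq ^ 2) • (dx * x))
    (hxdy : x * dy = tq • (dy * x) + (tq ^ 2 - 1) • (dx * y))
    (hydx : y * dx = tq • (dx * y))
    (hydy : y * dy = (tq ^ 2) • (dy * y)) :
    let θ₁ : A := (tq ^ 2 + 1) • (x * yi ^ 2 * dx)
    let θ₂ : A := (-(tq ^ 2 + 1)) • (x * (x * yi * dy - dx))
    θ₁ * x = x * θ₁ ∧ θ₁ * y = y * θ₁ ∧ θ₂ * x = x * θ₂ ∧ θ₂ * y = y * θ₂ := by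
  have hq2 : tq ^ 2 ≠ 0 := pow_ne_zero _ hq
  have Hyy : ∀ a : A, yi * (y * a) = a := fun a => by rw [← mul_assoc, hy', one_mul]
  have Hyy' : ∀ a : A, y * (yi * a) = a := fun a => by rw [← mul_assoc, hy, one_mul]
  -- reversed relations
  have hyx : y * x = tq⁻¹ • (x * y) := by
    rw [hxy, smul_smul, inv_mul_cancel₀ hq, one_smul]
  have hdxx : dx * x = (tq ^ 2)⁻¹ • (x * dx) := by
    rw [hxdx, smul_smul, inv_mul_cancel₀ hq2, one_smul]
  have hdxy : dx * y = tq⁻¹ • (y * dx) := by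
    rw [hydx, smul_smul, inv_mul_cancel₀ hq, one_smul]
  have hdyy : dy * y = (tq ^ 2)⁻¹ • (y * dy) := by
    rw [hydy, smul_smul, inv_mul_cancel₀ hq2, one_smul]
  have hdyx : dy * x = tq⁻¹ • (x * dy) - (tq⁻¹ * (tq ^ 2 - 1)) • (dx * y) := by
    rw [hxdy, smul_add, smul_smul, inv_mul_cancel₀ hq, one_smul, smul_smul]
    abel
  -- sandwich with yi
  have hyix : yi * x = tq • (x * yi) := by
    have h := congrArg (fun a => yi * a * yi) hyx
    simp only [mul_assoc, Hyy, hy, mul_one, mul_smul_comm, smul_mul_assoc] at h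
    rw [h, smul_smul, mul_inv_cancel₀ hq, one_smul]
  have hdxyi : dx * yi = tq • (yi * dx) := by
    have h := congrArg (fun a => yi * a * yi) hydx
    simpa only [mul_assoc, Hyy, hy, mul_one, mul_smul_comm, smul_mul_assoc] using h
  have hdyyi : dy * yi = (tq ^ 2) • (yi * dy) := by
    have h := congrArg (fun a => yi * a * yi) hydy
    simpa only [mul_assoc, Hyy, hy, mul_one, mul_smul_comm, smul_mul_assoc] using h
  -- extended (∀ a) forms for simp normalization with right-associated products
  have Eyx : ∀ a : A, y * (x * a) = tq⁻¹ • (x * (y * a)) := fun a => by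
    rw [← mul_assoc, hyx, smul_mul_assoc, mul_assoc]
  have Edxx : ∀ a : A, dx * (x * a) = (tq ^ 2)⁻¹ • (x * (dx * a)) := fun a => by
    rw [← mul_assoc, hdxx, smul_mul_assoc, mul_assoc]
  have Edxy : ∀ a : A, dx * (y * a) = tq⁻¹ • (y * (dx * a)) := fun a => by
    rw [← mul_assoc, hdxy, smul_mul_assoc, mul_assoc]
  have Edyy : ∀ a : A, dy * (y * a) = (tq ^ 2)⁻¹ • (y * (dy * a)) := fun a => by
    rw [← mul_assoc, hdyy, smul_mul_assoc, mul_assoc]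
  have Edyx : ∀ a : A, dy * (x * a)
      = tq⁻¹ • (x * (dy * a)) - (tq⁻¹ * (tq ^ 2 - 1)) • (dx * (y * a)) := fun a => by
    rw [← mul_assoc, hdyx, sub_mul, smul_mul_assoc, smul_mul_assoc, mul_assoc, mul_assoc]
  have Eyix : ∀ a : A, yi * (x * a) = tq • (x * (yi * a)) := fun a => by
    rw [← mul_assoc, hyix, smul_mul_assoc, mul_assoc]
  have Edxyi : ∀ a : A, dx * (yi * a) = tq • (yi * (dx * a)) := fun a => by
    rw [← mul_assoc, hdxyi, smul_mul_assoc, mul_assoc]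
  have Edyyi : ∀ a : A, dy * (yi * a) = (tq ^ 2) • (yi * (dy * a)) := fun a => by
    rw [← mul_assoc, hdyyi, smul_mul_assoc, mul_assoc]
  refine ⟨?_, ?_, ?_, ?_⟩
  all_goals
    show _ = _
    simp only [pow_two, mul_sub, sub_mul, mul_assoc, smul_mul_assoc,
      mul_smul_comm, smul_sub, hdxx, hdxy, hdyy, hdyx, hyix, hdxyi, hdyyi, hyx,
      Eyx, Edxx, Edxy, Edyy, Edyx, Eyix, Edxyi, Edyyi,
      hy, hy', Hyy, Hyy', mul_one, one_mul, smul_smul]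
    try (match_scalars <;> field_simp <;> ring)
end
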